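/- Let s = diag(μ₁·I_{n₁},…,μ_m·I_{n_m}, I_n, μ_m^{-1}·I_{n_m},…,μ₁^{-1}·I_{n₁}) be a noncentral semisimple element of SO_{2ℓ+1}(k) (char k ≠ 2, ℓ ≥ 3, μ_i ≠ μ_j^{±1} for i<j, μ_i ≠ 1, n + 2Σn_i = 2ℓ+1). Then every eigenspace of s on Λ²(k^{2ℓ+1}) has dimension at most 2ℓ² − ℓ, with equality only for eigenvalue 1 and s (up to conjugation) of the form diag(−1,…,−1,1,−1,…,−1). -/

import Mathlib

open TensorProduct

/-- The submodule of `W ⊗ W` spanned by the squares `x ⊗ x`; the quotient by it is the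
exterior square `Λ²(W)`. -/
noncomputable def sqT (k W : Type*) [Field k] [AddCommGroup W] [Module k W] :
    Submodule k (W ⊗[k] W) :=
  Submodule.span k {z | ∃ x : W, z = x ⊗ₜ[k] x}

/-- The endomorphism of `Λ²(W) = (W ⊗ W)/⟨x ⊗ x⟩` induced by an endomorphism of `W`. -/
noncomputable def extSqMap {k W : Type*} [Field k] [AddCommGroup W] [Module k W]
    (u : W →ₗ[k] W) : ((W ⊗[k] W) ⧸ sqT k W) →ₗ[k] ((W ⊗[k] W) ⧸ sqT k W) :=
  Submodule.mapQ _ _ (TensorProduct.map u u)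
    (Submodule.span_le.mpr (by
      rintro _ ⟨x, rfl⟩
      simp only [SetLike.mem_coe, Submodule.mem_comap, TensorProduct.map_tmul]
      exact Submodule.subset_span ⟨u x, rfl⟩))

/-!
In the basis `e_i ∧ e_j` (`i < j`) of `Λ²W` the map `Λ²s` is diagonal with entries `a_i a_j`, so
the `μ`-eigenspace has dimension `#{i < j | a_i a_j = μ}`. With `N = 2ℓ + 1` it suffices to find
at least `N - 1` bad pairs (`a_i a_j ≠ μ`), and to see that equality forces `N - 1` of the `a_i`
to equal one square root `v` of `μ`. As the `a_i` are nonzero, the good partners of an index all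
carry the same value; so if every value occurs at most `N - 3` times, every index has two bad
partners. Otherwise some value `v` occurs `N - 2` or `N - 1` times (not `N`: `s` is not scalar).
If `v² ≠ μ` all pairs inside its class are bad; if `v² = μ` all pairs between the class and its
complement are bad, and these are few enough only when the class has `N - 1` elements. Finally
the odd multiplicity of `1` and the presence of `μ₁` and `μ₁⁻¹` force `v = -1`, the remaining
eigenvalue to be `1`, and `μ = v² = 1`.
-/

open Module TensorProduct Finset

theorem Module.Basis.repr_apply_of_apply_eq_smul {k V ι : Type*} [Field k] [AddCommGroup V]
    [Module k V] (B : Basis ι k V) {f : V →ₗ[k] V} {d : ι → k}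
    (hf : ∀ i, f (B i) = d i • B i) (v : V) (i : ι) :
    B.repr (f v) i = d i * B.repr v i := by
  classical
  have : (B.coord i).comp f = d i • B.coord i := B.ext fun j => by
    rcases eq_or_ne j i with rfl | hji
    · simp [hf]
    · simp [hf, hji]
  exact LinearMap.congr_fun this v

theorem Module.End.finrank_eigenspace_of_basis {k V ι : Type*} [Field k] [AddCommGroup V]
    [Module k V] [Finite ι] (B : Basis ι k V) {f : V →ₗ[k] V} {d : ι → k}
    (hf : ∀ i, f (B i) = d i • B i) (μ : k) :
    finrank k (eigenspace f μ) = Nat.card {i // d i = μ} := by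
  classical
  have : Fintype ι := Fintype.ofFinite ι
  have heig : eigenspace f μ = Submodule.span k (B '' {i | d i = μ}) := by
    ext v
    rw [mem_eigenspace_iff, Basis.mem_span_image, B.ext_elem_iff]
    simp only [B.repr_apply_of_apply_eq_smul hf, map_smul, Finsupp.smul_apply, smul_eq_mul]
    refine forall_congr' fun i => ?_
    rw [Finset.mem_coe, Finsupp.mem_support_iff, Set.mem_ofPred_eq, ← sub_eq_zero, ← sub_mul,
      mul_eq_zero, sub_eq_zero, or_iff_not_imp_right]
  have hli : LinearIndependent k fun i : {i | d i = μ} => B i :=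
    B.linearIndependent.comp _ Subtype.val_injective
  rw [heig, Set.image_eq_range, finrank_span_eq_card hli, Nat.card_eq_fintype_card]
  rfl

namespace sqT

variable {k W ι : Type*} [Field k] [AddCommGroup W] [Module k W]

theorem mkQ_tmul_self (x : W) : (sqT k W).mkQ (x ⊗ₜ x) = 0 :=
  (Submodule.Quotient.mk_eq_zero _).mpr (Submodule.subset_span ⟨x, rfl⟩)

theorem mkQ_tmul_comm (x y : W) : (sqT k W).mkQ (x ⊗ₜ y) = -(sqT k W).mkQ (y ⊗ₜ x) := by
  rw [← map_neg, Submodule.mkQ_apply, Submodule.mkQ_apply, Submodule.Quotient.eq, sub_neg_eq_add]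
  have : x ⊗ₜ[k] y + y ⊗ₜ x = (x + y) ⊗ₜ (x + y) - x ⊗ₜ x - y ⊗ₜ y := by
    simp only [add_tmul, tmul_add]; abel
  rw [this]
  exact sub_mem (sub_mem (Submodule.subset_span ⟨_, rfl⟩) (Submodule.subset_span ⟨_, rfl⟩))
    (Submodule.subset_span ⟨_, rfl⟩)

theorem le_ker_coord_sub_coord_swap (b : Basis ι k W) (i j : ι) :
    sqT k W ≤
      LinearMap.ker ((b.tensorProduct b).coord (i, j) - (b.tensorProduct b).coord (j, i)) :=
  Submodule.span_le.mpr <| by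
    rintro _ ⟨x, rfl⟩
    simp [mul_comm]

noncomputable def wedgeCoord (b : Basis ι k W) (i j : ι) : Dual k ((W ⊗[k] W) ⧸ sqT k W) :=
  (sqT k W).liftQ _ (le_ker_coord_sub_coord_swap b i j)

theorem wedgeCoord_mkQ_tmul (b : Basis ι k W) (i j i' j' : ι) [DecidableEq ι] :
    wedgeCoord b i j ((sqT k W).mkQ (b i' ⊗ₜ b j')) =
      (if (i', j') = (i, j) then 1 else 0) - (if (i', j') = (j, i) then 1 else 0) := by
  rw [wedgeCoord, Submodule.mkQ_apply, Submodule.liftQ_apply]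
  simp [Finsupp.single_apply, ite_and]

variable [LinearOrder ι]

noncomputable def wedge (b : Basis ι k W) (p : {p : ι × ι // p.1 < p.2}) :
    (W ⊗[k] W) ⧸ sqT k W :=
  (sqT k W).mkQ (b p.1.1 ⊗ₜ b p.1.2)

theorem wedgeCoord_wedge (b : Basis ι k W) (p q : {p : ι × ι // p.1 < p.2}) :
    wedgeCoord b q.1.1 q.1.2 (wedge b p) = if p = q then 1 else 0 := by
  classical
  have hswap : (p.1.1, p.1.2) ≠ (q.1.2, q.1.1) := fun h => by
    simp only [Prod.mk.injEq] at h
    exact lt_asymm p.2 (h.1 ▸ h.2 ▸ q.2)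
  rw [wedge, wedgeCoord_mkQ_tmul, if_neg hswap, sub_zero]
  simp [Subtype.ext_iff, Prod.ext_iff]

theorem linearIndependent_wedge (b : Basis ι k W) : LinearIndependent k (wedge b) :=
  .of_pairwise_dual_eq_zero_one _ (fun q => wedgeCoord b q.1.1 q.1.2)
    (fun q p hqp => (wedgeCoord_wedge b p q).trans (if_neg hqp.symm))
    (fun q => (wedgeCoord_wedge b q q).trans (if_pos rfl))

theorem mkQ_tmul_mem_span_wedge (b : Basis ι k W) (i j : ι) :
    (sqT k W).mkQ (b i ⊗ₜ b j) ∈ Submodule.span k (Set.range (wedge b)) := by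
  rcases lt_trichotomy i j with h | rfl | h
  · exact Submodule.subset_span ⟨⟨(i, j), h⟩, rfl⟩
  · rw [mkQ_tmul_self]
    exact Submodule.zero_mem _
  · rw [mkQ_tmul_comm]
    exact Submodule.neg_mem _ (Submodule.subset_span ⟨⟨(j, i), h⟩, rfl⟩)

theorem top_le_span_range_wedge (b : Basis ι k W) :
    ⊤ ≤ Submodule.span k (Set.range (wedge b)) :=
  calc ⊤ = (Submodule.span k (Set.range (b.tensorProduct b))).map (sqT k W).mkQ := by
        rw [Basis.span_eq, ← LinearMap.range_eq_map, Submodule.range_mkQ]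
    _ ≤ _ := by
        rw [Submodule.map_span, Submodule.span_le]
        rintro _ ⟨_, ⟨⟨i, j⟩, rfl⟩, rfl⟩
        rw [Basis.tensorProduct_apply']
        exact mkQ_tmul_mem_span_wedge b i j

noncomputable def wedgeBasis (b : Basis ι k W) :
    Basis {p : ι × ι // p.1 < p.2} k ((W ⊗[k] W) ⧸ sqT k W) :=
  .mk (linearIndependent_wedge b) (top_le_span_range_wedge b)

theorem wedgeBasis_apply (b : Basis ι k W) (p : {p : ι × ι // p.1 < p.2}) :
    wedgeBasis b p = wedge b p :=
  Basis.mk_apply _ _ _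

end sqT

open sqT

theorem extSqMap_mkQ {k W : Type*} [Field k] [AddCommGroup W] [Module k W] (s : W →ₗ[k] W)
    (x : W ⊗[k] W) : extSqMap s ((sqT k W).mkQ x) = (sqT k W).mkQ (map s s x) :=
  rfl

theorem extSqMap_wedge {k W ι : Type*} [Field k] [AddCommGroup W] [Module k W] [LinearOrder ι]
    (b : Basis ι k W) {s : W →ₗ[k] W} {a : ι → k} (hb : ∀ i, s (b i) = a i • b i)
    (p : {p : ι × ι // p.1 < p.2}) :
    extSqMap s (wedge b p) = (a p.1.1 * a p.1.2) • wedge b p := by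
  rw [wedge, extSqMap_mkQ, map_tmul, hb, hb, smul_tmul_smul, map_smul]

theorem finrank_eigenspace_extSqMap {k W ι : Type*} [Field k] [AddCommGroup W] [Module k W]
    [Fintype ι] [LinearOrder ι] [DecidableEq k] (b : Basis ι k W) {s : W →ₗ[k] W} {a : ι → k}
    (hb : ∀ i, s (b i) = a i • b i) (μ : k) :
    finrank k (Module.End.eigenspace (extSqMap s) μ) =
      #{p : ι × ι | p.1 < p.2 ∧ a p.1 * a p.2 = μ} := by
  rw [Module.End.finrank_eigenspace_of_basis (wedgeBasis b) (d := fun p => a p.1.1 * a p.1.2)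
    (fun p => by rw [wedgeBasis_apply, extSqMap_wedge b hb]),
    Nat.card_congr (Equiv.subtypeSubtypeEquivSubtypeInter (fun p : ι × ι => p.1 < p.2)
      (fun p => a p.1 * a p.2 = μ)), Nat.card_eq_fintype_card,
    Fintype.card_subtype]

theorem two_mul_card_filter_lt {ι : Type*} [Fintype ι] [LinearOrder ι] (r : ι → ι → Prop)
    [DecidableRel r] (hr : ∀ x y, r x y → r y x) :
    2 * #{p : ι × ι | p.1 < p.2 ∧ r p.1 p.2} = #{p : ι × ι | p.1 ≠ p.2 ∧ r p.1 p.2} :=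
  calc 2 * #{p : ι × ι | p.1 < p.2 ∧ r p.1 p.2}
      = #{p : ι × ι | p.1 < p.2 ∧ r p.1 p.2} + #{p : ι × ι | p.2 < p.1 ∧ r p.1 p.2} := by
        rw [two_mul]
        exact congrArg _ (card_equiv (Equiv.prodComm ι ι) (by grind))
    _ = #{p : ι × ι | p.1 < p.2 ∧ r p.1 p.2 ∨ p.2 < p.1 ∧ r p.1 p.2} := by
        rw [filter_or, card_union_of_disjoint
          (disjoint_filter.mpr fun p _ h h' => lt_asymm h.1 h'.1)]
    _ = #{p : ι × ι | p.1 ≠ p.2 ∧ r p.1 p.2} := by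
        congr 1
        grind

section MulNePairs

variable {ι M : Type*} [Fintype ι] [CommMonoidWithZero M] [DecidableEq M] (a : ι → M) (c : M)

theorem card_filter_mul_eq_add_three_le [IsCancelMulZero M] {x : ι} (hx : a x ≠ 0)
    (hsmall : ∀ v, #{i | a i = v} + 3 ≤ Fintype.card ι) :
    #{y | a x * a y = c} + 3 ≤ Fintype.card ι := by
  obtain h | ⟨y₀, hy₀⟩ := ({y | a x * a y = c} : Finset ι).eq_empty_or_nonempty
  · rw [h, card_empty, zero_add]
    exact (Nat.le_add_left _ _).trans (hsmall (a x))
  · rw [mem_filter_univ] at hy₀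
    have hfiber (y : ι) : a x * a y = c ↔ a y = a y₀ :=
      ⟨fun h => mul_left_cancel₀ hx (h.trans hy₀.symm), fun h => h ▸ hy₀⟩
    rw [filter_congr fun y _ => hfiber y]
    exact hsmall (a y₀)

variable [DecidableEq ι]

def mulNePairs : Finset (ι × ι) := {p | p.1 ≠ p.2 ∧ a p.1 * a p.2 ≠ c}

theorem offDiag_filter_eq_subset_mulNePairs {v : M} (hv : v * v ≠ c) :
    ({i | a i = v} : Finset ι).offDiag ⊆ mulNePairs a c := by
  intro p hp
  simp only [mem_offDiag, mem_filter_univ] at hp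
  simp only [mulNePairs, mem_filter_univ, hp.1, hp.2.1]
  exact ⟨hp.2.2, hv⟩

theorem two_mul_card_filter_eq_mul_card_filter_ne_le [IsCancelMulZero M] {v : M} (hv0 : v ≠ 0)
    (hv : v * v = c) : 2 * (#{i | a i = v} * #{i | a i ≠ v}) ≤ #(mulNePairs a c) := by
  set V : Finset ι := {i | a i = v}
  set O : Finset ι := {i | a i ≠ v}
  have hsub : V ×ˢ O ∪ O ×ˢ V ⊆ mulNePairs a c := by
    intro p hp
    simp only [V, O, mem_union, mem_product, mem_filter_univ] at hp
    simp only [mulNePairs, mem_filter_univ, ← hv]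
    rcases hp with ⟨h1, h2⟩ | ⟨h1, h2⟩
    · exact ⟨fun h => h2 (h ▸ h1), by rw [h1]; exact fun h => h2 (mul_left_cancel₀ hv0 h)⟩
    · exact ⟨fun h => h1 (h ▸ h2), by rw [h2]; exact fun h => h1 (mul_right_cancel₀ hv0 h)⟩
  have hdisj : Disjoint (V ×ˢ O) (O ×ˢ V) :=
    disjoint_product.mpr (Or.inl (disjoint_filter_filter_not univ univ (a · = v)))
  calc 2 * (#V * #O) = #(V ×ˢ O ∪ O ×ˢ V) := by
        rw [card_union_of_disjoint hdisj, card_product, card_product]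
        ring
    _ ≤ #(mulNePairs a c) := card_le_card hsub

theorem two_mul_card_le_card_mulNePairs [IsCancelMulZero M] (ha0 : ∀ i, a i ≠ 0)
    (hsmall : ∀ v, #{i | a i = v} + 3 ≤ Fintype.card ι) :
    2 * Fintype.card ι ≤ #(mulNePairs a c) := by
  have hdeg (x : ι) : 2 ≤ #{y | x ≠ y ∧ a x * a y ≠ c} := by
    have hgood : #{y | ¬(x ≠ y ∧ a x * a y ≠ c)} ≤ #{y | a x * a y = c} + 1 := by
      refine (card_le_card fun y hy => ?_).trans (card_insert_le x _)
      simp only [mem_filter_univ, not_and_or, not_not, ne_eq] at hy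
      rcases hy with rfl | hy
      · exact mem_insert_self _ _
      · exact mem_insert_of_mem ((mem_filter_univ y).mpr hy)
    have := card_filter_add_card_filter_not (s := univ) fun y => x ≠ y ∧ a x * a y ≠ c
    have := card_filter_mul_eq_add_three_le a c (ha0 x) hsmall
    rw [card_univ] at *
    omega
  calc 2 * Fintype.card ι = ∑ _x : ι, 2 := by rw [sum_const, card_univ, smul_eq_mul, mul_comm]
    _ ≤ ∑ x, #{y | x ≠ y ∧ a x * a y ≠ c} := sum_le_sum fun x _ => hdeg x
    _ = #(mulNePairs a c) := by
      simp only [mulNePairs, card_filter, Fintype.sum_prod_type]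

theorem le_card_mulNePairs [IsCancelMulZero M] (ha0 : ∀ i, a i ≠ 0) (hne : ∃ i j, a i ≠ a j)
    (hcard : 6 ≤ Fintype.card ι) :
    2 * (Fintype.card ι - 1) ≤ #(mulNePairs a c) ∧
      (#(mulNePairs a c) ≤ 2 * (Fintype.card ι - 1) →
        ∃ v, v * v = c ∧ #{i | a i = v} = Fintype.card ι - 1) := by
  by_cases hsmall : ∀ v, #{i | a i = v} + 3 ≤ Fintype.card ι
  · have := two_mul_card_le_card_mulNePairs a c ha0 hsmall
    omega
  push Not at hsmall
  obtain ⟨v, hv⟩ := hsmall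
  have hsplit : #{i | a i = v} + #{i | a i ≠ v} = Fintype.card ι :=
    card_filter_add_card_filter_not _
  have hne' : 0 < #{i | a i ≠ v} := by
    obtain ⟨i, j, hij⟩ := hne
    refine card_pos.mpr (if hi : a i = v then ⟨j, ?_⟩ else ⟨i, ?_⟩) <;> simp only [mem_filter_univ]
    exacts [hi ▸ hij.symm, hi]
  obtain ⟨i₀, hi₀⟩ : ({i | a i = v} : Finset ι).Nonempty := card_pos.mp (by omega)
  have hv0 : v ≠ 0 := (mem_filter_univ i₀).mp hi₀ ▸ ha0 i₀
  by_cases hvc : v * v = c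
  · have := two_mul_card_filter_eq_mul_card_filter_ne_le a c hv0 hvc
    obtain h | h : #{i | a i ≠ v} = 1 ∨ #{i | a i ≠ v} = 2 := by omega
    · rw [h] at this
      exact ⟨by omega, fun _ => ⟨v, hvc, by omega⟩⟩
    · rw [h] at this
      omega
  · have := card_le_card (offDiag_filter_eq_subset_mulNePairs a c hvc)
    rw [offDiag_card] at this
    have := Nat.mul_le_mul_right #{i | a i = v} (show 4 ≤ #{i | a i = v} by omega)
    omega

end MulNePairs

theorem card_filter_lt_add_card_filter_lt_not {ι : Type*} [Fintype ι] [LinearOrder ι]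
    (P : ι × ι → Prop) [DecidablePred P] :
    #{p : ι × ι | p.1 < p.2 ∧ P p} + #{p : ι × ι | p.1 < p.2 ∧ ¬P p} =
      (Fintype.card ι).choose 2 := by
  rw [← card_univ, ← card_product_filter_lt,
    ← card_filter_add_card_filter_not (s := {x ∈ univ ×ˢ univ | x.1 < x.2}) P, filter_filter,
    filter_filter]
  simp

theorem card_pairs_mul_eq_add_le_choose_two {ι M : Type*} [Fintype ι] [LinearOrder ι]
    [CommMonoidWithZero M] [IsCancelMulZero M] [DecidableEq M] {a : ι → M} (c : M)
    (ha0 : ∀ i, a i ≠ 0) (hne : ∃ i j, a i ≠ a j) (hcard : 6 ≤ Fintype.card ι) :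
    #{p : ι × ι | p.1 < p.2 ∧ a p.1 * a p.2 = c} + (Fintype.card ι - 1) ≤
        (Fintype.card ι).choose 2 ∧
      (#{p : ι × ι | p.1 < p.2 ∧ a p.1 * a p.2 = c} + (Fintype.card ι - 1) =
          (Fintype.card ι).choose 2 →
        ∃ v, v * v = c ∧ #{i | a i = v} = Fintype.card ι - 1) := by
  have htotal := card_filter_lt_add_card_filter_lt_not fun p : ι × ι => a p.1 * a p.2 = c
  have hhalf := two_mul_card_filter_lt (fun x y => a x * a y ≠ c) fun x y h => by rwa [mul_comm]
  obtain ⟨hle, heq⟩ := le_card_mulNePairs a c ha0 hne hcard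
  simp only [mulNePairs, ne_eq] at hhalf hle heq
  exact ⟨by omega, fun h => heq (by omega)⟩

theorem LinearMap.BilinForm.injective_of_isometry {R M : Type*} [CommRing R] [AddCommGroup M]
    [Module R M] {B : LinearMap.BilinForm R M} (hB : B.SeparatingLeft) {s : M →ₗ[R] M}
    (hs : ∀ v w, B (s v) (s w) = B v w) : Function.Injective s :=
  (injective_iff_map_eq_zero s).mpr fun v hv => hB v fun w => by
    rw [← hs, hv, map_zero, LinearMap.zero_apply]

theorem Multiset.exists_eq_count_nsmul_add_singleton {α : Type*} [DecidableEq α]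
    {s : Multiset α} {v : α} (h : count v s + 1 = card s) : ∃ w, s = count v s • {v} + {w} := by
  have hsplit := filter_add_not (v = ·) s
  rw [filter_eq] at hsplit
  have hcard : card (filter (fun x => ¬v = x) s) = 1 := by
    have := congrArg card hsplit
    rw [card_add, card_replicate] at this
    omega
  obtain ⟨w, hw⟩ := card_eq_one.mp hcard
  exact ⟨w, by rw [nsmul_singleton, ← hw, hsplit]⟩

theorem Multiset.eq_count_nsmul_neg_one_add_one {K : Type*} [Field K] [DecidableEq K]
    {s : Multiset K} (h0 : (0 : K) ∉ s) {μ : K} (hμ1 : μ ≠ 1) (hμ : μ ∈ s) (hμinv : μ⁻¹ ∈ s)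
    (hodd : Odd (count 1 s)) {v : K} (heven : Even (count v s)) (hv : count v s + 1 = card s) :
    v = -1 ∧ s = count v s • {-1} + {1} := by
  obtain ⟨w, hw⟩ := exists_eq_count_nsmul_add_singleton hv
  have hmem (x : K) (hx : x ∈ s) : x = v ∨ x = w := by
    rw [hw, mem_add, mem_nsmul, mem_singleton, mem_singleton] at hx
    exact hx.imp_left And.right
  have hv1 : v ≠ 1 := by
    rintro rfl
    exact Nat.not_odd_iff_even.mpr heven hodd
  have hw1 : w = 1 :=
    ((hmem 1 (count_pos.mp hodd.pos)).resolve_left (Ne.symm hv1)).symm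
  have hμv : μ = v := (hmem μ hμ).resolve_right (hw1 ▸ hμ1)
  have hμinvv : μ⁻¹ = v := (hmem _ hμinv).resolve_right (hw1 ▸ inv_ne_one.mpr hμ1)
  have hvv : v * v = 1 :=
    (congrArg₂ (· * ·) hμv hμinvv).symm.trans (mul_inv_cancel₀ fun h => h0 (h ▸ hμ))
  obtain rfl : v = -1 := (mul_self_eq_one_iff.mp hvv).resolve_left hv1
  exact ⟨rfl, hw1 ▸ hw⟩

theorem Multiset.count_map_univ_val {ι α : Type*} [Fintype ι] [DecidableEq α] (a : ι → α)
    (v : α) : count v (univ.val.map a) = #{i | a i = v} := by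
  rw [count_map, Finset.card_def, filter_val]
  exact congrArg _ (filter_congr fun _ _ => eq_comm)

section EigenvalueMultiset

variable {ι K : Type*} [Fintype ι] [DivisionRing K] (n₀ : ℕ) (μ : ι → K) (n : ι → ℕ)

theorem count_one_nsmul_add_sum [DecidableEq K] (hμ1 : ∀ i, μ i ≠ 1) :
    Multiset.count 1 (n₀ • ({1} : Multiset K) +
      ∑ i, (n i • ({μ i} : Multiset K) + n i • ({(μ i)⁻¹} : Multiset K))) = n₀ := by
  simp [(hμ1 _).symm, Ne.symm (inv_ne_one.mpr (hμ1 _))]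

theorem mem_nsmul_add_sum {i : ι} (hi : n i ≠ 0) :
    μ i ∈ n₀ • ({1} : Multiset K) +
        ∑ i, (n i • ({μ i} : Multiset K) + n i • ({(μ i)⁻¹} : Multiset K)) ∧
      (μ i)⁻¹ ∈ n₀ • ({1} : Multiset K) +
        ∑ i, (n i • ({μ i} : Multiset K) + n i • ({(μ i)⁻¹} : Multiset K)) := by
  simp only [Multiset.mem_add, Multiset.mem_sum]
  exact ⟨Or.inr ⟨i, mem_univ _, by simp [hi]⟩, Or.inr ⟨i, mem_univ _, by simp [hi]⟩⟩

end EigenvalueMultiset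

theorem Nat.choose_two_two_mul_add_one (ℓ : ℕ) :
    (2 * ℓ + 1).choose 2 = (2 * ℓ ^ 2 - ℓ) + 2 * ℓ := by
  have : ℓ ≤ 2 * ℓ ^ 2 := by nlinarith
  rw [choose_two_right, Nat.add_sub_cancel]
  refine Nat.div_eq_of_eq_mul_left two_pos ?_
  zify [this]
  ring

theorem stmt19_general {k : Type*} [Field k]
    {W : Type*} [AddCommGroup W] [Module k W]
    (ℓ : ℕ) (hl : 3 ≤ ℓ)
    (B : LinearMap.BilinForm k W) (hBnd : B.Nondegenerate)
    (s : W →ₗ[k] W) (hs : ∀ v w, B (s v) (s w) = B v w)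
    (m nn : ℕ) (hm : 1 ≤ m)
    (μ : Fin m → k) (n : Fin m → ℕ)
    (hμ1 : ∀ i, μ i ≠ 1)
    (hpos : ∀ i, 1 ≤ n i) (hsum : nn + 2 * ∑ i, n i = 2 * ℓ + 1)
    (b : Module.Basis (Fin (2 * ℓ + 1)) k W) (a : Fin (2 * ℓ + 1) → k)
    (hb : ∀ x, s (b x) = a x • b x)
    (hmult : Finset.univ.val.map a = nn • ({1} : Multiset k) +
      ∑ i : Fin m, ((n i) • ({μ i} : Multiset k) + (n i) • ({(μ i)⁻¹} : Multiset k))) :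
    ∀ μ0 : k,
      Module.finrank k (Module.End.eigenspace (extSqMap s) μ0) ≤ 2 * ℓ ^ 2 - ℓ ∧
      (Module.finrank k (Module.End.eigenspace (extSqMap s) μ0) = 2 * ℓ ^ 2 - ℓ →
        μ0 = 1 ∧ Finset.univ.val.map a =
          (2 * ℓ) • ({(-1 : k)} : Multiset k) + ({1} : Multiset k)) := by
  classical
  intro μ0
  have ha0 (x : Fin (2 * ℓ + 1)) : a x ≠ 0 := fun h =>
    b.ne_zero x (LinearMap.BilinForm.injective_of_isometry hBnd.1 hs (by simp [hb, h]))
  have hodd : Odd (Multiset.count 1 (univ.val.map a)) := by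
    rw [hmult, count_one_nsmul_add_sum nn μ n hμ1]
    exact Nat.odd_iff.mpr (by omega)
  let i₀ : Fin m := ⟨0, hm⟩
  have hmem := hmult ▸ mem_nsmul_add_sum nn μ n (Nat.one_le_iff_ne_zero.mp (hpos i₀))
  have hne : ∃ x y, a x ≠ a y := by
    obtain ⟨x, -, hx⟩ := Multiset.mem_map.mp (Multiset.count_pos.mp hodd.pos)
    obtain ⟨y, -, hy⟩ := Multiset.mem_map.mp hmem.1
    exact ⟨x, y, by rw [hx, hy]; exact (hμ1 i₀).symm⟩
  obtain ⟨hle, heq⟩ := card_pairs_mul_eq_add_le_choose_two μ0 ha0 hne (by simp; omega)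
  rw [Fintype.card_fin, Nat.choose_two_two_mul_add_one, Nat.add_sub_cancel] at hle heq
  rw [finrank_eigenspace_extSqMap b hb μ0]
  refine ⟨by omega, fun h => ?_⟩
  obtain ⟨v, hv, hcard⟩ := heq (by omega)
  have hcount := Multiset.count_map_univ_val a v
  obtain ⟨rfl, hA⟩ := Multiset.eq_count_nsmul_neg_one_add_one
    (fun h => by obtain ⟨x, -, hx⟩ := Multiset.mem_map.mp h; exact ha0 x hx)
    (hμ1 i₀) hmem.1 hmem.2 hodd (by rw [hcount, hcard]; exact even_two_mul ℓ)
    (by rw [hcount, hcard, Multiset.card_map, card_val, card_univ, Fintype.card_fin])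
  exact ⟨by rw [← hv]; norm_num, by rwa [hcount, hcard] at hA⟩

/-- Let
`s = diag(μ₁·I_{n₁},…,μ_m·I_{n_m}, I_n, μ_m^{-1}·I_{n_m},…,μ₁^{-1}·I_{n₁})` be a
noncentral semisimple element of `SO_{2ℓ+1}(k)` (`char k ≠ 2`, `ℓ ≥ 3`, `μ_i ≠ μ_j^{±1}`
for `i < j`, `μ_i ≠ 1`, `n + 2Σn_i = 2ℓ+1`).  Then every eigenspace of `s` on
`Λ²(k^{2ℓ+1})` has dimension at most `2ℓ² − ℓ`, with equality only for eigenvalue `1`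
and `s` (up to conjugation) of the form `diag(−1,…,−1,1,−1,…,−1)`. -/
theorem stmt19 {k : Type*} [Field k] [IsAlgClosed k] (hk2 : (2 : k) ≠ 0)
    {W : Type*} [AddCommGroup W] [Module k W] [FiniteDimensional k W]
    (ℓ : ℕ) (hl : 3 ≤ ℓ) (hW : Module.finrank k W = 2 * ℓ + 1)
    (B : LinearMap.BilinForm k W) (hBnd : B.Nondegenerate)
    (hBsymm : ∀ v w : W, B v w = B w v)
    (s : W →ₗ[k] W) (hs : ∀ v w, B (s v) (s w) = B v w)
    (m nn : ℕ) (hm : 1 ≤ m) (hnn : 1 ≤ nn)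
    (μ : Fin m → k) (n : Fin m → ℕ)
    (hμ1 : ∀ i, μ i ≠ 1)
    (hμ : ∀ i j : Fin m, i < j → μ i ≠ μ j ∧ μ i ≠ (μ j)⁻¹)
    (hpos : ∀ i, 1 ≤ n i) (hsum : nn + 2 * ∑ i, n i = 2 * ℓ + 1)
    (b : Module.Basis (Fin (2 * ℓ + 1)) k W) (a : Fin (2 * ℓ + 1) → k)
    (hb : ∀ x, s (b x) = a x • b x)
    (hmult : Finset.univ.val.map a = nn • ({1} : Multiset k) +
      ∑ i : Fin m, ((n i) • ({μ i} : Multiset k) + (n i) • ({(μ i)⁻¹} : Multiset k))) :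
    ∀ μ0 : k,
      Module.finrank k (Module.End.eigenspace (extSqMap s) μ0) ≤ 2 * ℓ ^ 2 - ℓ ∧
      (Module.finrank k (Module.End.eigenspace (extSqMap s) μ0) = 2 * ℓ ^ 2 - ℓ →
        μ0 = 1 ∧ Finset.univ.val.map a =
          (2 * ℓ) • ({(-1 : k)} : Multiset k) + ({1} : Multiset k)) :=
  stmt19_general ℓ hl B hBnd s hs m nn hm μ n hμ1 hpos hsum b a hb hmult
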